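/- arXiv:1401.5617 — 3 statements merged into one kernel-verified Lean document; each statement's English description precedes it below -/
import Mathlib

section
/- Let p ≥ 1, let Γ = {0,1}^p carry the uniform probability distribution, let q : Γ → ℝ and fix a coordinate i. Let flip_i : Γ → Γ be the map that inverts the i-th coordinate (0 ↦ 1, 1 ↦ 0) and leaves the other coordinates unchanged. Then the expectation over γ drawn uniformly from Γ of (1/4)(q(flip_i(γ)) − q(γ))² equals σ²_{Ti} := E_{γ_{-i}}(V_{γ_i}(q | γ_{-i})). In particular the Monte Carlo estimator σ̂²_{Ti} = (1/(4N)) Σ_{ℓ=1}^N (q(flip_i(γ_ℓ)) − q(γ_ℓ))², with γ_1,…,γ_N drawn uniformly from Γ, is an unbiased estimator of σ²_{Ti}. -/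
open Finset

lemma sum_eval_aux {N : ℕ} {X : Type*} [Fintype X] [DecidableEq X] (f : X → ℝ) (ℓ : Fin N) :
    ∑ d : Fin N → X, f (d ℓ) = (Fintype.card X : ℝ) ^ (N - 1) * ∑ x, f x := by
  rw [Fintype.sum_equiv (Equiv.funSplitAt ℓ X) (fun d => f (d ℓ)) (fun pr => f pr.1)
    (fun d => rfl)]
  rw [Fintype.sum_prod_type]
  simp only [Finset.sum_const, nsmul_eq_mul]
  have : Fintype.card ({j : Fin N // j ≠ ℓ} → X) = Fintype.card X ^ (N - 1) := by
    rw [Fintype.card_fun]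
    congr 1
    simp [Fintype.card_subtype_compl]
  simp [Finset.card_univ, this, Finset.mul_sum]

lemma key_aux (p : ℕ) (q : (Fin p → Bool) → ℝ) (i : Fin p)
    (flip : (Fin p → Bool) → (Fin p → Bool))
    (hflip : ∀ γ, flip γ = Function.update γ i (!γ i)) :
    ∑ γ : Fin p → Bool, (q (flip γ) - q γ) ^ 2
      = 2 * ∑ γ ∈ Finset.univ.filter (fun γ : Fin p → Bool => γ i = false),
          (q (Function.update γ i true) - q (Function.update γ i false)) ^ 2 := by
  rw [← Finset.sum_filter_add_sum_filter_not Finset.univ (fun γ : Fin p → Bool => γ i = false)]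
  have h1 : ∑ γ ∈ Finset.univ.filter (fun γ : Fin p → Bool => γ i = false),
      (q (flip γ) - q γ) ^ 2
      = ∑ γ ∈ Finset.univ.filter (fun γ : Fin p → Bool => γ i = false),
          (q (Function.update γ i true) - q (Function.update γ i false)) ^ 2 := by
    refine Finset.sum_congr rfl fun γ hγ => ?_
    simp only [Finset.mem_filter] at hγ
    have h2 : Function.update γ i false = γ := by
      rw [← hγ.2]; exact Function.update_eq_self i γ
    rw [hflip, hγ.2, h2]
    simp
  have h2 : ∑ γ ∈ Finset.univ.filter (fun γ : Fin p → Bool => ¬ γ i = false),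
      (q (flip γ) - q γ) ^ 2
      = ∑ γ ∈ Finset.univ.filter (fun γ : Fin p → Bool => γ i = false),
          (q (Function.update γ i true) - q (Function.update γ i false)) ^ 2 := by
    refine Finset.sum_nbij' (fun γ => Function.update γ i false)
      (fun γ => Function.update γ i true) ?_ ?_ ?_ ?_ ?_
    · intro γ hγ; simp
    · intro γ hγ; simp
    · intro γ hγ
      simp only [Finset.mem_filter, Bool.not_eq_false] at hγ
      rw [Function.update_idem, ← hγ.2, Function.update_eq_self]
    · intro γ hγ
      simp only [Finset.mem_filter] at hγ
      rw [Function.update_idem, ← hγ.2, Function.update_eq_self]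
    · intro γ hγ
      simp only [Finset.mem_filter, Bool.not_eq_false] at hγ
      have hγi : γ i = true := hγ.2
      have hq : Function.update γ i true = γ := by
        rw [← hγi]; exact Function.update_eq_self i γ
      rw [Function.update_idem, Function.update_idem, hq, hflip, hγi]
      simp only [Bool.not_true]
      ring
  rw [h1, h2]; ring

/-- With `Γ = {0,1}^p` uniform, `q : Γ → ℝ`, a coordinate `i`, and
`flipᵢ : Γ → Γ` inverting the `i`-th coordinate, the expectation over `γ` uniform on `Γ` of
`(1/4)(q(flipᵢ γ) − q(γ))²` equals `σ²_{Ti} = E_{γ₋ᵢ}(V_{γᵢ}(q | γ₋ᵢ))`; in particular the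
Monte Carlo estimator `(1/(4N)) Σ_{ℓ=1}^N (q(flipᵢ γ_ℓ) − q(γ_ℓ))²` over `N` i.i.d. uniform
draws `γ₁,…,γ_N` is unbiased for `σ²_{Ti}` (its expectation over the uniform distribution
of the draws equals `σ²_{Ti}`). -/
theorem stmt_2 (p : ℕ) (hp : 1 ≤ p) (q : (Fin p → Bool) → ℝ) (i : Fin p)
    (flip : (Fin p → Bool) → (Fin p → Bool))
    (hflip : ∀ γ, flip γ = Function.update γ i (!γ i))
    (σTi2 : ℝ)
    (hσTi2 : σTi2 =
      (∑ γ ∈ Finset.univ.filter (fun γ : Fin p → Bool => γ i = false),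
          (((q (Function.update γ i true)) ^ 2 + (q (Function.update γ i false)) ^ 2) / 2
            - ((q (Function.update γ i true) + q (Function.update γ i false)) / 2) ^ 2))
        / 2 ^ (p - 1)) :
    ((∑ γ : Fin p → Bool, (1 / 4 : ℝ) * (q (flip γ) - q γ) ^ 2) / 2 ^ p = σTi2) ∧
      (∀ N : ℕ, 1 ≤ N →
        (∑ draws : Fin N → (Fin p → Bool),
            (1 / (4 * (N : ℝ))) * ∑ ℓ : Fin N, (q (flip (draws ℓ)) - q (draws ℓ)) ^ 2)
          / ((2 ^ p) ^ N) = σTi2) := by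
  set S : ℝ := ∑ γ ∈ Finset.univ.filter (fun γ : Fin p → Bool => γ i = false),
      (q (Function.update γ i true) - q (Function.update γ i false)) ^ 2 with hS
  have hkey := key_aux p q i flip hflip
  have hvar : (∑ γ ∈ Finset.univ.filter (fun γ : Fin p → Bool => γ i = false),
      (((q (Function.update γ i true)) ^ 2 + (q (Function.update γ i false)) ^ 2) / 2
        - ((q (Function.update γ i true) + q (Function.update γ i false)) / 2) ^ 2)) = S / 4 := by
    rw [hS, Finset.sum_div]
    exact Finset.sum_congr rfl fun γ _ => by ring
  have hσ : σTi2 = (S / 4) / 2 ^ (p - 1) := by rw [hσTi2, hvar]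
  have hpow : (2 : ℝ) ^ p = 2 * 2 ^ (p - 1) := by
    rw [← pow_succ']
    congr 1
    omega
  have hpne : (2 : ℝ) ^ (p - 1) ≠ 0 := by positivity
  have hT : ∑ γ : Fin p → Bool, (1 / 4 : ℝ) * (q (flip γ) - q γ) ^ 2 = S / 2 := by
    rw [← Finset.mul_sum, hkey]; ring
  constructor
  · rw [hT, hσ, hpow, div_eq_div_iff (by positivity) (by positivity)]
    ring
  · intro N hN
    have hsum : ∀ ℓ : Fin N, ∑ draws : Fin N → (Fin p → Bool),
        (q (flip (draws ℓ)) - q (draws ℓ)) ^ 2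
        = ((2 : ℝ) ^ p) ^ (N - 1) * (2 * S) := by
      intro ℓ
      rw [sum_eval_aux (fun γ => (q (flip γ) - q γ) ^ 2) ℓ, hkey]
      congr 1
      rw [Fintype.card_fun]
      push_cast
      simp
    have hswap : ∑ draws : Fin N → (Fin p → Bool),
        (1 / (4 * (N : ℝ))) * ∑ ℓ : Fin N, (q (flip (draws ℓ)) - q (draws ℓ)) ^ 2
        = (1 / (4 * (N : ℝ))) * (N * (((2 : ℝ) ^ p) ^ (N - 1) * (2 * S))) := by
      rw [← Finset.mul_sum]
      congr 1
      rw [Finset.sum_comm]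
      rw [Finset.sum_congr rfl fun ℓ _ => hsum ℓ]
      simp [Finset.sum_const, Finset.card_univ, mul_comm]
    rw [hswap, hσ]
    have hNne : (N : ℝ) ≠ 0 := by positivity
    have hpNe : ((2 : ℝ) ^ p) ^ N = ((2 : ℝ) ^ p) ^ (N - 1) * 2 ^ p := by
      rw [← pow_succ]
      congr 1
      omega
    rw [hpNe, hpow, div_eq_div_iff (by positivity) (by positivity)]
    field_simp
end

section
/- Let Σ be a real symmetric positive-definite p×p matrix, T ⊂ {1,…,p} the set of true regressor indices and M = {1,…,p}∖T, and assume orthogonality: Σ_{ℓj} = 0 for all j ∈ T and ℓ ∈ M. Then (i) for any h, j ∈ T and any b ⊆ M (with b disjoint from {h,j}), the partial covariance satisfies Σ_{hj.b} = Σ_{hj}; and (ii) for any coordinate i ∈ M and any configuration γ_{-i}, the two quantities σ² + Σ_{h,j ∈ T∖a_{γ^{(i,1)}}} β_{0,h}Σ_{hj.b_{γ^{(i,1)}}}β_{0,j} and σ² + Σ_{h,j ∈ T∖a_{γ^{(i,0)}}} β_{0,h}Σ_{hj.b_{γ^{(i,0)}}}β_{0,j} are equal, so that the limiting total-index numerator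 c_i := (1/(4·2^{p-1})) Σ_{γ_{-i}} [log of their ratio]² equals 0. -/
open Matrix

/-- The partial covariance `Σ_{hj.b} = Σ_{hj} − Σ_{hb}(Σ_{bb})⁻¹Σ_{bj}` (equal to `Σ_{hj}`
when `b = ∅`). -/
noncomputable def partialCov {p : ℕ} (S : Matrix (Fin p) (Fin p) ℝ) (h j : Fin p)
    (b : Finset (Fin p)) : ℝ :=
  S h j - (fun k : {x // x ∈ b} => S h k) ⬝ᵥ
    ((S.submatrix (Subtype.val : {x // x ∈ b} → Fin p)
        (Subtype.val : {x // x ∈ b} → Fin p))⁻¹).mulVec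
      (fun l : {x // x ∈ b} => S l j)

/-- The set `a_γ = {i : γᵢ = 1}` of regressors included in model `γ`. -/
def aSet {p : ℕ} (γ : Fin p → Bool) : Finset (Fin p) :=
  Finset.univ.filter (fun i => γ i = true)

/-- The limit `σ² + Σ_{h,j ∈ T∖a_γ} β₀ₕ Σ_{hj.b_γ} β₀ⱼ` of the residual variance of
model `γ`, where `b_γ = a_γ∖T`. -/
noncomputable def limitVar {p : ℕ} (S : Matrix (Fin p) (Fin p) ℝ) (σ2 : ℝ)
    (T : Finset (Fin p)) (β₀ : Fin p → ℝ) (γ : Fin p → Bool) : ℝ :=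
  σ2 + ∑ h ∈ T \ aSet γ, ∑ j ∈ T \ aSet γ,
    β₀ h * partialCov S h j (aSet γ \ T) * β₀ j

/-- Let `Σ` be symmetric positive definite, `T` the true regressor set with
complement `M`, and assume orthogonality `Σ_{ℓj} = 0` for all `j ∈ T`, `ℓ ∈ M`.  Then
(i) for `h, j ∈ T` and `b ⊆ M`, the partial covariance satisfies `Σ_{hj.b} = Σ_{hj}`; and
(ii) for any coordinate `i ∈ M` and any configuration `γ₋ᵢ`, the limiting residual
variances of `γ^{(i,1)}` and `γ^{(i,0)}` are equal, so that the limiting total-index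
numerator `cᵢ = (1/(4·2^(p−1))) Σ_{γ₋ᵢ} [log of their ratio]²` equals `0`. -/
theorem stmt_9 (p : ℕ) (hp : 1 ≤ p) (S : Matrix (Fin p) (Fin p) ℝ) (hS : S.PosDef)
    (σ2 : ℝ) (hσ2 : 0 < σ2) (T : Finset (Fin p)) (β₀ : Fin p → ℝ)
    (hT : ∀ i, i ∈ T ↔ β₀ i ≠ 0)
    (horth : ∀ j ∈ T, ∀ ℓ ∉ T, S ℓ j = 0) :
    (∀ h ∈ T, ∀ j ∈ T, ∀ b : Finset (Fin p), b ⊆ Tᶜ →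
        partialCov S h j b = S h j) ∧
      (∀ i : Fin p, i ∉ T →
        (∀ γ : Fin p → Bool, γ i = false →
          limitVar S σ2 T β₀ (Function.update γ i true)
            = limitVar S σ2 T β₀ (Function.update γ i false)) ∧
        (1 / (4 * 2 ^ (p - 1) : ℝ)) *
            ∑ γ ∈ Finset.univ.filter (fun γ : Fin p → Bool => γ i = false),
              (Real.log (limitVar S σ2 T β₀ (Function.update γ i true)
                / limitVar S σ2 T β₀ (Function.update γ i false))) ^ 2 = 0) := by
  have pc : ∀ h ∈ T, ∀ j ∈ T, ∀ b : Finset (Fin p), b ⊆ Tᶜ →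
      partialCov S h j b = S h j := by
    intro h hh j hj b hb
    unfold partialCov
    have hv : (fun l : {x // x ∈ b} => S l.1 j) = 0 := by
      funext l
      exact horth j hj l.1 (by simpa using hb l.2)
    rw [hv]
    simp [Matrix.mulVec_zero]
  refine ⟨pc, fun i hi => ?_⟩
  have key : ∀ γ : Fin p → Bool, γ i = false →
      limitVar S σ2 T β₀ (Function.update γ i true)
        = limitVar S σ2 T β₀ (Function.update γ i false) := by
    intro γ hγ
    unfold limitVar
    have hdiff : T \ aSet (Function.update γ i true)
        = T \ aSet (Function.update γ i false) := by
      ext x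
      by_cases hx : x = i
      · subst hx; simp [aSet, Function.update, hi]
      · simp [aSet, Function.update, hx]
    have hb1 : aSet (Function.update γ i true) \ T ⊆ Tᶜ := fun x hx => by
      simp_all [Finset.mem_sdiff]
    have hb0 : aSet (Function.update γ i false) \ T ⊆ Tᶜ := fun x hx => by
      simp_all [Finset.mem_sdiff]
    rw [hdiff]
    congr 1
    apply Finset.sum_congr rfl
    intro h hh
    apply Finset.sum_congr rfl
    intro j hj
    have hhT : h ∈ T := (Finset.mem_sdiff.1 hh).1
    have hjT : j ∈ T := (Finset.mem_sdiff.1 hj).1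
    rw [pc h hhT j hjT _ hb1, pc h hhT j hjT _ hb0]
  refine ⟨key, ?_⟩
  have : ∀ γ ∈ Finset.univ.filter (fun γ : Fin p → Bool => γ i = false),
      (Real.log (limitVar S σ2 T β₀ (Function.update γ i true)
        / limitVar S σ2 T β₀ (Function.update γ i false))) ^ 2 = 0 := by
    intro γ hγ
    have hγ' : γ i = false := (Finset.mem_filter.1 hγ).2
    rw [key γ hγ']
    set x := limitVar S σ2 T β₀ (Function.update γ i false)
    rcases eq_or_ne x 0 with h0 | h0
    · simp [h0]
    · rw [div_self h0, Real.log_one]; ring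
  rw [Finset.sum_eq_zero this, mul_zero]
end

section
/- Let Σ be a real symmetric positive-definite p×p matrix, σ² > 0, T ⊂ {1,…,p} the set of true regressor indices with coefficients β_{0,h} ≠ 0 for h ∈ T, and M = {1,…,p}∖T, and assume orthogonality: Σ_{ℓj} = 0 for all j ∈ T and ℓ ∈ M. Then for every i ∈ T, the limiting total-index numerator c_i = (1/(4·2^{p-1})) Σ_{γ_{-i}} [log((σ² + Σ_{h,j∈T∖a_{γ^{(i,1)}}}β_{0,h}Σ_{hj.b_{γ^{(i,1)}}}β_{0,j})/(σ² + Σ_{h,j∈T∖a_{γ^{(i,0)}}}β_{0,h}Σ_{hj.b_{γ^{(i,0)}}}β_{0,j}))]² is strictly positive. In particular, taking γ_{-i} which includes all regressors of T∖{i} and no others yields a summand [log(σ²/(σ² + β_{0,i}²Σ_{ii}))]² > 0. -/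
open Matrix

/-- Let `Σ` be symmetric positive definite, `σ² > 0`, `T` the true regressor
set (with `β₀ₕ ≠ 0` for `h ∈ T`) and `M` its complement, and assume orthogonality
`Σ_{ℓj} = 0` for `j ∈ T`, `ℓ ∈ M`.  Then for every `i ∈ T` the limiting total-index
numerator `cᵢ = (1/(4·2^(p−1))) Σ_{γ₋ᵢ} [log(limitVar(γ^{(i,1)})/limitVar(γ^{(i,0)}))]²`
is strictly positive; in particular the configuration `γ₋ᵢ` including all regressors of
`T∖{i}` and no others yields a summand `[log(σ²/(σ² + β₀ᵢ²Σᵢᵢ))]² > 0`. -/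
theorem stmt_10 (p : ℕ) (hp : 1 ≤ p) (S : Matrix (Fin p) (Fin p) ℝ) (hS : S.PosDef)
    (σ2 : ℝ) (hσ2 : 0 < σ2) (T : Finset (Fin p)) (β₀ : Fin p → ℝ)
    (hT : ∀ i, i ∈ T ↔ β₀ i ≠ 0)
    (horth : ∀ j ∈ T, ∀ ℓ ∉ T, S ℓ j = 0) :
    ∀ i ∈ T,
      0 < (1 / (4 * 2 ^ (p - 1) : ℝ)) *
          ∑ γ ∈ Finset.univ.filter (fun γ : Fin p → Bool => γ i = false),
            (Real.log (limitVar S σ2 T β₀ (Function.update γ i true)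
              / limitVar S σ2 T β₀ (Function.update γ i false))) ^ 2 ∧
        ((Real.log (limitVar S σ2 T β₀
              (Function.update (fun j => decide (j ∈ T ∧ j ≠ i)) i true)
            / limitVar S σ2 T β₀
              (Function.update (fun j => decide (j ∈ T ∧ j ≠ i)) i false))) ^ 2
          = (Real.log (σ2 / (σ2 + (β₀ i) ^ 2 * S i i))) ^ 2 ∧
        
        0 < (Real.log (σ2 / (σ2 + (β₀ i) ^ 2 * S i i))) ^ 2) := by
  intro i hi
  set γ₀ : Fin p → Bool := fun j => decide (j ∈ T ∧ j ≠ i) with hγ₀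
  have hA1 : aSet (Function.update γ₀ i true) = T := by
    ext j
    rcases eq_or_ne j i with rfl | hj
    · simp [aSet, Function.update, hi]
    · simp [aSet, Function.update, hγ₀, hj]
  have hA0 : aSet (Function.update γ₀ i false) = T \ {i} := by
    ext j
    rcases eq_or_ne j i with rfl | hj
    · simp [aSet, Function.update]
    · simp [aSet, Function.update, hγ₀, hj]
  have hpc : ∀ h j : Fin p, partialCov S h j ∅ = S h j := by
    intro h j; simp [partialCov, dotProduct]
  have hL1 : limitVar S σ2 T β₀ (Function.update γ₀ i true) = σ2 := by
    simp [limitVar, hA1]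
  have hL0 : limitVar S σ2 T β₀ (Function.update γ₀ i false)
      = σ2 + (β₀ i) ^ 2 * S i i := by
    rw [limitVar, hA0]
    have h1 : T \ (T \ {i}) = {i} := by
      rw [Finset.sdiff_sdiff_self_left]
      exact Finset.inter_eq_right.mpr (Finset.singleton_subset_iff.mpr hi)
    have h2 : (T \ {i}) \ T = ∅ :=
      Finset.sdiff_eq_empty_iff_subset.mpr (Finset.sdiff_subset)
    rw [h1, h2]
    simp [hpc]; ring
  have hSii : 0 < S i i := by
    have h0 : (Pi.single i (1:ℝ)) ≠ (0 : Fin p → ℝ) := by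
      intro h; have := congrFun h i; simp at this
    have := hS.dotProduct_mulVec_pos h0
    simpa using this
  have hβ : β₀ i ≠ 0 := (hT i).mp hi
  have hc : 0 < (β₀ i) ^ 2 * S i i :=
    mul_pos (pow_pos (abs_pos.mpr hβ) 2 |>.trans_eq (sq_abs _)) hSii
  have hlogpos : 0 < (Real.log (σ2 / (σ2 + (β₀ i) ^ 2 * S i i))) ^ 2 := by
    have hlt : σ2 / (σ2 + (β₀ i) ^ 2 * S i i) < 1 := by
      rw [div_lt_one (by linarith)]; linarith
    have hpos : 0 < σ2 / (σ2 + (β₀ i) ^ 2 * S i i) := div_pos hσ2 (by linarith)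
    have := Real.log_neg hpos hlt
    exact (pow_pos (abs_pos.mpr this.ne) 2).trans_eq (sq_abs _)
  have heq : (Real.log (limitVar S σ2 T β₀ (Function.update γ₀ i true)
        / limitVar S σ2 T β₀ (Function.update γ₀ i false))) ^ 2
      = (Real.log (σ2 / (σ2 + (β₀ i) ^ 2 * S i i))) ^ 2 := by
    rw [hL1, hL0]
  refine ⟨?_, heq, hlogpos⟩
  apply mul_pos (by positivity)
  apply Finset.sum_pos' (fun γ _ => sq_nonneg _)
  refine ⟨γ₀, ?_, ?_⟩
  · simp [hγ₀]
  · rw [heq]; exact hlogpos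
end
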